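/- arXiv:1106.0214 — 10 statements merged into one kernel-verified Lean document; each statement's English description precedes it below -/
import Mathlib

section
/- Let A, B be invertible 2×2 complex matrices with AB = BA, and let X, Y be 2×2 matrices. Define f₂ = det A, f₁ = the coefficient of ζ in det(X − ζA) (i.e., f₁ = a₄x₁ − a₃x₂ − a₂x₃ + a₁x₄ where X = [[x₁,x₂],[x₃,x₄]], A = [[a₁,a₂],[a₃,a₄]]), f₀ = det X, and Π¹ = f₂(YA + BX) − f₁AB, Π² = f₂YX − f₀AB. Assume det Π¹ ≠ 0 and set U = Π²(Π¹)⁻¹A, V = A⁻¹(YA + BX − UB). Then (U − ζA)(V − ζB) = (Y − ζB)(X − ζA) for all ζ ∈ ℂ. -/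
open Matrix

/-- The middle coefficient of `det (X - ζ A)` for 2×2 matrices:
`f₁(X;A) = a₄x₁ − a₃x₂ − a₂x₃ + a₁x₄`. -/
noncomputable def f1coef (X A : Matrix (Fin 2) (Fin 2) ℂ) : ℂ :=
  A 1 1 * X 0 0 - A 1 0 * X 0 1 - A 0 1 * X 1 0 + A 0 0 * X 1 1

lemma mixed_adj (X A : Matrix (Fin 2) (Fin 2) ℂ) :
    X * adjugate A + A * adjugate X = f1coef X A • (1 : Matrix (Fin 2) (Fin 2) ℂ) := by
  ext i j
  fin_cases i <;> fin_cases j <;>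
    simp [Matrix.mul_apply, Matrix.adjugate_fin_two, f1coef, Fin.sum_univ_two,
      Matrix.one_apply] <;> ring

lemma chz (X A : Matrix (Fin 2) (Fin 2) ℂ) :
    (adjugate X * A) * (adjugate X * A)
      = f1coef X A • (adjugate X * A) - (X.det * A.det) • (1 : Matrix (Fin 2) (Fin 2) ℂ) := by
  ext i j
  fin_cases i <;> fin_cases j <;>
    simp [Matrix.mul_apply, Matrix.adjugate_fin_two, f1coef, Fin.sum_univ_two,
      Matrix.one_apply, Matrix.det_fin_two, Matrix.vecMul, dotProduct] <;> ring

theorem stmt0 (A B X Y : Matrix (Fin 2) (Fin 2) ℂ)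
    (hA : IsUnit A.det) (hB : IsUnit B.det) (hAB : A * B = B * A)
    (P1 P2 U V : Matrix (Fin 2) (Fin 2) ℂ)
    (hP1 : P1 = A.det • (Y * A + B * X) - f1coef X A • (A * B))
    (hP2 : P2 = A.det • (Y * X) - X.det • (A * B))
    (hdet : P1.det ≠ 0)
    (hU : U = P2 * P1⁻¹ * A)
    (hV : V = A⁻¹ * (Y * A + B * X - U * B)) :
    ∀ ζ : ℂ, (U - ζ • A) * (V - ζ • B) = (Y - ζ • B) * (X - ζ • A) := by
  set f2 := A.det with hf2def
  set f1 := f1coef X A with hf1def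
  set f0 := X.det with hf0def
  have hf2 : f2 ≠ 0 := by
    simpa [hf2def, isUnit_iff_ne_zero] using hA
  have hcan : ∀ M N : Matrix (Fin 2) (Fin 2) ℂ, f2 • M = f2 • N → M = N := by
    intro M N h
    exact smul_right_injective _ hf2 h
  have hAAi : A * A⁻¹ = 1 := Matrix.mul_nonsing_inv A hA
  have hP1u : IsUnit P1.det := isUnit_iff_ne_zero.mpr hdet
  have hP1i : P1⁻¹ * P1 = 1 := Matrix.nonsing_inv_mul P1 hP1u
  have hP1i' : P1 * P1⁻¹ = 1 := Matrix.mul_nonsing_inv P1 hP1u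
  set S := P2 * P1⁻¹ with hSdef
  set Z := adjugate X * A with hZdef
  have hXadjA : X * adjugate A = f1 • 1 - A * adjugate X := by
    rw [← mixed_adj X A]; abel
  -- e1
  have e1 : P1 * adjugate A = (f2 * f2) • Y - f2 • (B * (A * adjugate X)) := by
    rw [hP1, hAB]
    simp only [sub_mul, add_mul, Matrix.smul_mul, Matrix.mul_assoc, Matrix.mul_adjugate,
      hXadjA, Matrix.mul_smul, mul_one, mul_sub, smul_sub, smul_smul]
    try module
  have e2 : P2 * adjugate A
      = (f2 * f1) • Y - f2 • (Y * (A * adjugate X)) - (f0 * f2) • B := by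
    rw [hP2, hAB]
    simp only [sub_mul, add_mul, Matrix.smul_mul, Matrix.mul_assoc, Matrix.mul_adjugate,
      hXadjA, Matrix.mul_smul, mul_one, mul_sub, smul_sub, smul_smul]
    try module
  have e3 : P1 * adjugate X
      = f2 • (Y * (A * adjugate X)) + (f0 * f2) • B - f1 • (B * (A * adjugate X)) := by
    rw [hP1, hAB]
    simp only [sub_mul, add_mul, Matrix.smul_mul, Matrix.mul_assoc, Matrix.mul_adjugate,
      Matrix.mul_smul, mul_one, mul_sub, smul_sub, smul_smul]
    try module
  -- identity (II)
  have eII : f2 • (P2 * adjugate A) = f1 • (P1 * adjugate A) - f2 • (P1 * adjugate X) := by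
    rw [e1, e2, e3]
    module
  -- multiply by A on the right to get identity (III)
  have eIII : f2 • P2 = f1 • P1 - P1 * Z := by
    have h := congrArg (fun M => M * A) eII
    simp only [Matrix.smul_mul, sub_mul, Matrix.mul_assoc, Matrix.adjugate_mul,
      Matrix.mul_smul, mul_one] at h
    rw [← hZdef] at h
    apply hcan
    rw [smul_sub, smul_comm f2 f1]
    exact h
  -- f2 • S = f1 • 1 - P1 * Z * P1⁻¹
  have hfS : f2 • S = f1 • 1 - P1 * Z * P1⁻¹ := by
    calc f2 • S = (f2 • P2) * P1⁻¹ := by rw [hSdef, Matrix.smul_mul]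
      _ = (f1 • P1 - P1 * Z) * P1⁻¹ := by rw [eIII]
      _ = f1 • 1 - P1 * Z * P1⁻¹ := by
          rw [sub_mul, Matrix.smul_mul, hP1i']
  -- Cayley-Hamilton step: f2 • (S * S) = f1 • S - f0 • 1
  have hS2 : f2 • (S * S) = f1 • S - f0 • (1 : Matrix (Fin 2) (Fin 2) ℂ) := by
    apply hcan
    have key : (f2 • S) * (f2 • S) = f2 • (f2 • (S * S)) := by
      rw [Matrix.smul_mul, Matrix.mul_smul]
    rw [← key, hfS]
    have hZZ : (P1 * Z * P1⁻¹) * (P1 * Z * P1⁻¹) = f1 • (P1 * Z * P1⁻¹) - (f0 * f2) • 1 := by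
      calc (P1 * Z * P1⁻¹) * (P1 * Z * P1⁻¹) = P1 * (Z * Z) * P1⁻¹ := by
            simp only [Matrix.mul_assoc]
            rw [← Matrix.mul_assoc P1⁻¹ P1, hP1i, Matrix.one_mul]
        _ = P1 * (f1 • Z - (f0 * f2) • 1) * P1⁻¹ := by rw [hZdef, chz, ← hf1def, ← hf0def, ← hf2def]
        _ = f1 • (P1 * Z * P1⁻¹) - (f0 * f2) • (P1 * P1⁻¹) := by
            simp only [mul_sub, sub_mul, Matrix.mul_smul, Matrix.smul_mul, mul_one, Matrix.mul_one]
        _ = f1 • (P1 * Z * P1⁻¹) - (f0 * f2) • 1 := by rw [hP1i']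
    calc (f1 • 1 - P1 * Z * P1⁻¹) * (f1 • 1 - P1 * Z * P1⁻¹)
        = (f1 * f1) • 1 - f1 • (P1 * Z * P1⁻¹) - f1 • (P1 * Z * P1⁻¹)
            + (P1 * Z * P1⁻¹) * (P1 * Z * P1⁻¹) := by
          simp only [sub_mul, mul_sub, Matrix.smul_mul, Matrix.mul_smul, smul_smul,
            Matrix.one_mul, Matrix.mul_one, smul_sub]
          abel
      _ = (f1 * f1) • 1 - f1 • (P1 * Z * P1⁻¹) - (f0 * f2) • 1 := by rw [hZZ]; abel
      _ = f1 • (f1 • 1 - P1 * Z * P1⁻¹) - (f0 * f2) • 1 := by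
          simp only [smul_sub, smul_smul]
      _ = f2 • (f1 • S - f0 • 1) := by
          rw [← hfS]
          module
  -- key solvent identity
  have hkey : S * (Y * A + B * X) - S * (S * (A * B)) = Y * X := by
    apply hcan
    have hC : f2 • (Y * A + B * X) = P1 + f1 • (A * B) := by rw [hP1]; abel
    have hE : f2 • (Y * X) = P2 + f0 • (A * B) := by rw [hP2]; abel
    have hSP1 : S * P1 = P2 := by rw [hSdef, Matrix.mul_assoc, hP1i, Matrix.mul_one]
    calc f2 • (S * (Y * A + B * X) - S * (S * (A * B)))
        = S * (f2 • (Y * A + B * X)) - (f2 • (S * S)) * (A * B) := by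
          simp only [smul_sub, Matrix.mul_smul, Matrix.smul_mul, Matrix.mul_assoc]
      _ = S * P1 + f1 • (S * (A * B)) - (f1 • (S * (A * B)) - f0 • (A * B)) := by
          rw [hC, hS2, mul_add, Matrix.mul_smul, sub_mul, Matrix.smul_mul, Matrix.smul_mul,
            Matrix.one_mul]
      _ = P2 + f0 • (A * B) := by rw [hSP1]; abel
      _ = f2 • (Y * X) := hE.symm
  -- pieces for the final computation
  have hUB : U * B = S * (A * B) := by rw [hU, Matrix.mul_assoc]
  have hAV : A * V = Y * A + B * X - U * B := by
    rw [hV, ← Matrix.mul_assoc, hAAi, Matrix.one_mul]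
  have hUV : U * V = Y * X := by
    have h1 : U * V = (U * A⁻¹) * (Y * A + B * X - U * B) := by
      rw [hV, Matrix.mul_assoc]
    have h2 : U * A⁻¹ = S := by rw [hU, Matrix.mul_assoc, hAAi, Matrix.mul_one]
    rw [h1, h2, mul_sub, hUB]
    exact hkey
  intro z
  have expand : (U - z • A) * (V - z • B)
      = U * V - z • (U * B + A * V) + (z * z) • (A * B) := by
    simp only [sub_mul, mul_sub, Matrix.smul_mul, Matrix.mul_smul, smul_smul, smul_add, smul_sub]
    abel
  have expand2 : (Y - z • B) * (X - z • A)
      = Y * X - z • (Y * A + B * X) + (z * z) • (B * A) := by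
    simp only [sub_mul, mul_sub, Matrix.smul_mul, Matrix.mul_smul, smul_smul, smul_add, smul_sub]
    abel
  have hsum : U * B + A * V = Y * A + B * X := by rw [hAV]; abel
  rw [expand, expand2, hUV, hAB, hsum]
end

section
/- Let A, B be invertible 2×2 complex matrices with AB = BA and X, Y, U, V be 2×2 matrices satisfying (U − ζA)(V − ζB) = (Y − ζB)(X − ζA) for all ζ ∈ ℂ, and suppose det(X − ζA) = det(U − ζA) as polynomials in ζ. If det(f₂(X;A)(YA+BX) − f₁(X;A)AB) ≠ 0, then U = (f₂(X;A)YX − f₀(X;A)AB)(f₂(X;A)(YA+BX) − f₁(X;A)AB)⁻¹A and V = A⁻¹(YA + BX − UB). -/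
open Matrix

lemma f1_key (X A : Matrix (Fin 2) (Fin 2) ℂ) :
    X * A.adjugate + A * X.adjugate = f1coef X A • 1 := by
  ext i j
  fin_cases i <;> fin_cases j <;>
    simp [Matrix.adjugate_fin_two, Matrix.mul_apply, Fin.sum_univ_two, f1coef,
      Matrix.one_apply, smul_eq_mul] <;> ring

lemma expand_det (W A : Matrix (Fin 2) (Fin 2) ℂ) (ζ : ℂ) :
    (W - ζ • A).det = W.det - ζ * f1coef W A + ζ ^ 2 * A.det := by
  simp only [Matrix.det_fin_two, Matrix.sub_apply, Matrix.smul_apply, f1coef, smul_eq_mul]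
  ring

theorem stmt1 (A B X Y U V : Matrix (Fin 2) (Fin 2) ℂ)
    (hA : IsUnit A.det) (hB : IsUnit B.det) (hAB : A * B = B * A)
    (hfact : ∀ ζ : ℂ, (U - ζ • A) * (V - ζ • B) = (Y - ζ • B) * (X - ζ • A))
    (hchar : ∀ ζ : ℂ, (X - ζ • A).det = (U - ζ • A).det)
    (hdet : (A.det • (Y * A + B * X) - f1coef X A • (A * B)).det ≠ 0) :
    U = (A.det • (Y * X) - X.det • (A * B)) *
        (A.det • (Y * A + B * X) - f1coef X A • (A * B))⁻¹ * A ∧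
    V = A⁻¹ * (Y * A + B * X - U * B) := by
  -- coefficient extraction from hfact
  have hUV : U * V = Y * X := by simpa using hfact 0
  have e1 : (U - A) * (V - B) = (Y - B) * (X - A) := by simpa using hfact 1
  have e2 : (U + A) * (V + B) = (Y + B) * (X + A) := by
    have := hfact (-1); simpa [neg_smul, sub_neg_eq_add] using this
  have hQ : U * B + A * V = Y * A + B * X := by
    have h3 : (U + A) * (V + B) - (U - A) * (V - B)
        = (Y + B) * (X + A) - (Y - B) * (X - A) := by rw [e1, e2]
    have l : (U + A) * (V + B) - (U - A) * (V - B)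
        = (U * B + A * V) + (U * B + A * V) := by noncomm_ring
    have r : (Y + B) * (X + A) - (Y - B) * (X - A)
        = (Y * A + B * X) + (Y * A + B * X) := by noncomm_ring
    rw [l, r] at h3
    have h4 : (2 : ℂ) • (U * B + A * V) = (2 : ℂ) • (Y * A + B * X) := by
      rw [two_smul, two_smul]; exact h3
    exact smul_right_injective _ (two_ne_zero) h4
  -- char poly coefficients
  have hdX : X.det = U.det := by simpa using hchar 0
  have hf1 : f1coef X A = f1coef U A := by
    have h1 := hchar 1
    rw [expand_det X A, expand_det U A] at h1
    linear_combination hdX - h1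
  -- adjugate identity for U
  have hUadj : U * A.adjugate = f1coef X A • 1 - A * U.adjugate := by
    have k := f1_key U A
    rw [hf1]
    exact eq_sub_of_add_eq k
  have hAV : A * V = Y * A + B * X - U * B := by
    rw [eq_sub_iff_add_eq, add_comm]; exact hQ
  have c1 : U * A.adjugate * (A * V) = A.det • (Y * X) := by
    rw [mul_assoc, ← mul_assoc A.adjugate, Matrix.adjugate_mul, smul_mul_assoc, one_mul,
      mul_smul_comm, hUV]
  have c2 : U * A.adjugate * (Y * A + B * X) - U * A.adjugate * (U * B)
      = A.det • (Y * X) := by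
    rw [← mul_sub, ← hAV]; exact c1
  have hUadjU : U * A.adjugate * U = f1coef X A • U - X.det • A := by
    rw [hUadj, sub_mul, smul_mul_assoc, one_mul, mul_assoc, Matrix.adjugate_mul, ← hdX,
      mul_smul_comm, mul_one]
  have c3 : U * A.adjugate * (U * B)
      = f1coef X A • (U * B) - X.det • (A * B) := by
    rw [← mul_assoc, hUadjU, sub_mul, smul_mul_assoc, smul_mul_assoc]
  set N : Matrix (Fin 2) (Fin 2) ℂ :=
    A.adjugate * (Y * A + B * X) - f1coef X A • B with hN
  have hUN : U * N = A.det • (Y * X) - X.det • (A * B) := by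
    rw [hN, mul_sub, ← mul_assoc, mul_smul_comm]
    rw [c3] at c2
    calc U * A.adjugate * (Y * A + B * X) - f1coef X A • (U * B)
        = U * A.adjugate * (Y * A + B * X)
          - (f1coef X A • (U * B) - X.det • (A * B)) - X.det • (A * B) := by abel
      _ = A.det • (Y * X) - X.det • (A * B) := by rw [c2]
  set M : Matrix (Fin 2) (Fin 2) ℂ :=
    A.det • (Y * A + B * X) - f1coef X A • (A * B) with hM
  have hMN : M = A * N := by
    rw [hM, hN, mul_sub, mul_smul_comm, ← mul_assoc, Matrix.mul_adjugate, smul_mul_assoc,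
      one_mul]
  have hNdet : IsUnit N.det := isUnit_iff_ne_zero.mpr
    (right_ne_zero_of_mul (a := A.det) (by rw [← Matrix.det_mul, ← hMN]; exact hdet))
  constructor
  · have hU : U = (A.det • (Y * X) - X.det • (A * B)) * N⁻¹ := by
      rw [← hUN, Matrix.mul_nonsing_inv_cancel_right _ _ hNdet]
    rw [hU, hMN, Matrix.mul_inv_rev, mul_assoc, mul_assoc,
      Matrix.nonsing_inv_mul A hA, mul_one]
  · rw [← hAV, ← mul_assoc, Matrix.nonsing_inv_mul A hA, one_mul]
end

section
/- Suppose a map R(x,y) = (u(x,y), v(x,y)) on X × X admits a matrix function A(x;α,ζ) such that A(u;α)A(v;β) = A(y;β)A(x;α) for all ζ, and suppose the equation A(x̂;α)A(ŷ;β)A(ẑ;γ) = A(x;α)A(y;β)A(z;γ) (identically in ζ) implies x̂ = x, ŷ = y, ẑ = z. Then R satisfies the parametric Yang–Baxter equation R²³R¹³R¹² = R¹²R¹³R²³. -/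
open Matrix

theorem stmt4 {X P : Type*} {n : ℕ}
    (R : P → P → X → X → X × X)
    (A : X → P → ℂ → Matrix (Fin n) (Fin n) ℂ)
    (hLax : ∀ α β x y, ∀ ζ : ℂ,
      A (R α β x y).1 α ζ * A (R α β x y).2 β ζ = A y β ζ * A x α ζ)
    (hUniq : ∀ α β γ : P, ∀ x y z x' y' z' : X,
      (∀ ζ : ℂ, A x' α ζ * A y' β ζ * A z' γ ζ = A x α ζ * A y β ζ * A z γ ζ) →
      x' = x ∧ y' = y ∧ z' = z)
    (α β γ : P) (x y z : X) :
    (fun p : X × X × X => (p.1, (R β γ p.2.1 p.2.2).1, (R β γ p.2.1 p.2.2).2))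
      ((fun p : X × X × X => ((R α γ p.1 p.2.2).1, p.2.1, (R α γ p.1 p.2.2).2))
        ((fun p : X × X × X => ((R α β p.1 p.2.1).1, (R α β p.1 p.2.1).2, p.2.2))
          (x, y, z)))
    =
    (fun p : X × X × X => ((R α β p.1 p.2.1).1, (R α β p.1 p.2.1).2, p.2.2))
      ((fun p : X × X × X => ((R α γ p.1 p.2.2).1, p.2.1, (R α γ p.1 p.2.2).2))
        ((fun p : X × X × X => (p.1, (R β γ p.2.1 p.2.2).1, (R β γ p.2.1 p.2.2).2))
          (x, y, z))) := by
  simp only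
  set u₁ := (R α β x y).1 with hu₁
  set v₁ := (R α β x y).2 with hv₁
  set x₂ := (R α γ u₁ z).1 with hx₂
  set w₁ := (R α γ u₁ z).2 with hw₁
  set p := (R β γ y z).1 with hp
  set w := (R β γ y z).2 with hw
  set u₂ := (R α γ x w).1 with hu₂
  set z₂ := (R α γ x w).2 with hz₂
  have key := hUniq α β γ (R α β u₂ p).1 (R α β u₂ p).2 z₂
    x₂ (R β γ v₁ w₁).1 (R β γ v₁ w₁).2 (fun ζ => by
      have l1 := hLax α β x y ζ
      have l2 := hLax α γ u₁ z ζ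
      have l3 := hLax β γ v₁ w₁ ζ
      have r1 := hLax β γ y z ζ
      have r2 := hLax α γ x w ζ
      have r3 := hLax α β u₂ p ζ
      rw [← hu₁, ← hv₁] at l1
      rw [← hx₂, ← hw₁] at l2
      rw [← hp, ← hw] at r1
      rw [← hu₂, ← hz₂] at r2
      calc A x₂ α ζ * A (R β γ v₁ w₁).1 β ζ * A (R β γ v₁ w₁).2 γ ζ
          = A x₂ α ζ * (A (R β γ v₁ w₁).1 β ζ * A (R β γ v₁ w₁).2 γ ζ) := by
            rw [mul_assoc]
        _ = A x₂ α ζ * (A w₁ γ ζ * A v₁ β ζ) := by rw [l3]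
        _ = A x₂ α ζ * A w₁ γ ζ * A v₁ β ζ := by rw [mul_assoc]
        _ = A z γ ζ * A u₁ α ζ * A v₁ β ζ := by rw [l2]
        _ = A z γ ζ * (A u₁ α ζ * A v₁ β ζ) := by rw [mul_assoc]
        _ = A z γ ζ * (A y β ζ * A x α ζ) := by rw [l1]
        _ = A z γ ζ * A y β ζ * A x α ζ := by rw [mul_assoc]
        _ = A p β ζ * A w γ ζ * A x α ζ := by rw [← r1]
        _ = A p β ζ * (A w γ ζ * A x α ζ) := by rw [mul_assoc]
        _ = A p β ζ * (A u₂ α ζ * A z₂ γ ζ) := by rw [r2]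
        _ = A p β ζ * A u₂ α ζ * A z₂ γ ζ := by rw [mul_assoc]
        _ = A (R α β u₂ p).1 α ζ * A (R α β u₂ p).2 β ζ * A z₂ γ ζ := by rw [r3])
  exact Prod.ext key.1 (Prod.ext key.2.1 key.2.2)
end

section
/- The functions J₁ = (α₁β₁/α₃)x₁x₂ + (α₁β₁/β₃)y₁y₂ and J₂ = x₂y₁ + x₁y₂ + (α₁β₁/(α₃β₃))(α₂ + x₁x₂)(β₂ + y₁y₂) are in involution with respect to the Poisson bracket {x₁,x₂} = α₃, {y₁,y₂} = β₃, {xᵢ,yⱼ} = 0, i.e., {J₁, J₂} = 0. -/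
/-- Partial derivatives of a function of four complex variables. -/
noncomputable def d1 (F : ℂ → ℂ → ℂ → ℂ → ℂ) (x1 x2 y1 y2 : ℂ) : ℂ :=
  deriv (fun t => F t x2 y1 y2) x1
noncomputable def d2 (F : ℂ → ℂ → ℂ → ℂ → ℂ) (x1 x2 y1 y2 : ℂ) : ℂ :=
  deriv (fun t => F x1 t y1 y2) x2
noncomputable def d3 (F : ℂ → ℂ → ℂ → ℂ → ℂ) (x1 x2 y1 y2 : ℂ) : ℂ :=
  deriv (fun t => F x1 x2 t y2) y1
noncomputable def d4 (F : ℂ → ℂ → ℂ → ℂ → ℂ) (x1 x2 y1 y2 : ℂ) : ℂ :=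
  deriv (fun t => F x1 x2 y1 t) y2

/-- The Poisson bracket `{F,G}` with `{x₁,x₂} = a3`, `{y₁,y₂} = b3`, cross brackets zero. -/
noncomputable def pbr (a3 b3 : ℂ) (F G : ℂ → ℂ → ℂ → ℂ → ℂ) (x1 x2 y1 y2 : ℂ) : ℂ :=
  a3 * (d1 F x1 x2 y1 y2 * d2 G x1 x2 y1 y2 - d2 F x1 x2 y1 y2 * d1 G x1 x2 y1 y2) +
  b3 * (d3 F x1 x2 y1 y2 * d4 G x1 x2 y1 y2 - d4 F x1 x2 y1 y2 * d3 G x1 x2 y1 y2)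

/-- The integral `J₁`. -/
noncomputable def J1 (a1 a3 b1 b3 : ℂ) (x1 x2 y1 y2 : ℂ) : ℂ :=
  a1 * b1 / a3 * (x1 * x2) + a1 * b1 / b3 * (y1 * y2)

/-- The integral `J₂`. -/
noncomputable def J2 (a1 a2 a3 b1 b2 b3 : ℂ) (x1 x2 y1 y2 : ℂ) : ℂ :=
  x2 * y1 + x1 * y2 + a1 * b1 / (a3 * b3) * (a2 + x1 * x2) * (b2 + y1 * y2)

lemma daff (a b x : ℂ) : deriv (fun t => a + b * t) x = b := by
  have h : HasDerivAt (fun t : ℂ => a + b * t) b x := by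
    simpa using ((hasDerivAt_id x).const_mul b).const_add a
  exact h.deriv

theorem stmt8 (a1 a2 a3 b1 b2 b3 : ℂ) (ha3 : a3 ≠ 0) (hb3 : b3 ≠ 0) :
    ∀ x1 x2 y1 y2 : ℂ,
      pbr a3 b3 (J1 a1 a3 b1 b3) (J2 a1 a2 a3 b1 b2 b3) x1 x2 y1 y2 = 0 := by
  intro x1 x2 y1 y2
  set c := a1 * b1 / (a3 * b3) with hc
  simp only [pbr, d1, d2, d3, d4, J1, J2]
  rw [show (fun t => a1 * b1 / a3 * (t * x2) + a1 * b1 / b3 * (y1 * y2))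
      = (fun t => a1 * b1 / b3 * (y1 * y2) + (a1 * b1 / a3 * x2) * t) from funext fun t => by ring,
    show (fun t => a1 * b1 / a3 * (x1 * t) + a1 * b1 / b3 * (y1 * y2))
      = (fun t => a1 * b1 / b3 * (y1 * y2) + (a1 * b1 / a3 * x1) * t) from funext fun t => by ring,
    show (fun t => a1 * b1 / a3 * (x1 * x2) + a1 * b1 / b3 * (t * y2))
      = (fun t => a1 * b1 / a3 * (x1 * x2) + (a1 * b1 / b3 * y2) * t) from funext fun t => by ring,
    show (fun t => a1 * b1 / a3 * (x1 * x2) + a1 * b1 / b3 * (y1 * t))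
      = (fun t => a1 * b1 / a3 * (x1 * x2) + (a1 * b1 / b3 * y1) * t) from funext fun t => by ring,
    show (fun t => x2 * y1 + t * y2 + c * (a2 + t * x2) * (b2 + y1 * y2))
      = (fun t => (x2 * y1 + c * a2 * (b2 + y1 * y2)) + (y2 + c * x2 * (b2 + y1 * y2)) * t) from funext fun t => by ring,
    show (fun t => t * y1 + x1 * y2 + c * (a2 + x1 * t) * (b2 + y1 * y2))
      = (fun t => (x1 * y2 + c * a2 * (b2 + y1 * y2)) + (y1 + c * x1 * (b2 + y1 * y2)) * t) from funext fun t => by ring,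
    show (fun t => x2 * t + x1 * y2 + c * (a2 + x1 * x2) * (b2 + t * y2))
      = (fun t => (x1 * y2 + c * (a2 + x1 * x2) * b2) + (x2 + c * (a2 + x1 * x2) * y2) * t) from funext fun t => by ring,
    show (fun t => x2 * y1 + x1 * t + c * (a2 + x1 * x2) * (b2 + y1 * t))
      = (fun t => (x2 * y1 + c * (a2 + x1 * x2) * b2) + (x1 + c * (a2 + x1 * x2) * y1) * t) from funext fun t => by ring,
    daff, daff, daff, daff, daff, daff, daff, daff]
  field_simp [hc]
  ring
end

section
/- Let n ≥ 1 and let Kα, Kβ be commuting invertible n×n complex matrices. Suppose U, V are n×n matrices satisfying (U − ζKα)(V − ζKβ) = (Y − ζKβ)(X − ζKα) identically in ζ, and det(U − ζKα) = det(X − ζKα) as polynomials in ζ. Define M₀ = I, N₀ = 0, M₁ = (YKα + KβX)Kβ⁻¹Kα⁻¹, N₁ = −YXKβ⁻¹Kα⁻¹, and recursively Mᵢ = M₁Mᵢ₋₁ + Nᵢ₋₁, Nᵢ = N₁Mᵢ₋₁. Writing det(X − ζKα) = Σᵢ (−1)ⁱ fᵢ ζⁱ with fₙ = det Kα, f₀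 = det X, if det(Σᵢ₌₁ⁿ (−1)ⁱ fᵢ Mᵢ₋₁) ≠ 0 then U = (−f₀ I − Σᵢ₌₁ⁿ (−1)ⁱ fᵢ Nᵢ₋₁)(Σᵢ₌₁ⁿ (−1)ⁱ fᵢ Mᵢ₋₁)⁻¹ Kα and V = Kα⁻¹(YKα + KβX − UKβ). -/
open Matrix Finset

open Polynomial in
/-- Evaluation of the characteristic polynomial of a matrix at a scalar. -/
lemma charpoly_eval_aux {n : ℕ} (B : Matrix (Fin n) (Fin n) ℂ) (ζ : ℂ) :
    B.charpoly.eval ζ = (ζ • (1 : Matrix (Fin n) (Fin n) ℂ) - B).det := by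
  rw [Matrix.charpoly, ← Polynomial.coe_evalRingHom, RingHom.map_det]
  congr 1
  ext i j
  by_cases h : i = j <;>
    simp [Matrix.charmatrix_apply, Matrix.map_apply, Matrix.diagonal_apply, Matrix.one_apply,
      Matrix.sub_apply, Matrix.smul_apply, h]

theorem stmt10 (n : ℕ) (hn : 1 ≤ n)
    (Kα Kβ X Y U V : Matrix (Fin n) (Fin n) ℂ)
    (hKα : IsUnit Kα.det) (hKβ : IsUnit Kβ.det) (hcomm : Kα * Kβ = Kβ * Kα)
    (hfact : ∀ ζ : ℂ, (U - ζ • Kα) * (V - ζ • Kβ) = (Y - ζ • Kβ) * (X - ζ • Kα))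
    (f : ℕ → ℂ)
    (hpoly : ∀ ζ : ℂ, (X - ζ • Kα).det = ∑ i ∈ Finset.range (n + 1), (-1 : ℂ) ^ i * f i * ζ ^ i)
    (hfn : f n = Kα.det) (hf0 : f 0 = X.det)
    (hchar : ∀ ζ : ℂ, (U - ζ • Kα).det = (X - ζ • Kα).det)
    (M N : ℕ → Matrix (Fin n) (Fin n) ℂ)
    (hM0 : M 0 = 1) (hN0 : N 0 = 0)
    (hM1 : M 1 = (Y * Kα + Kβ * X) * Kβ⁻¹ * Kα⁻¹)
    (hN1 : N 1 = -(Y * X * Kβ⁻¹ * Kα⁻¹))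
    (hrec : ∀ i, 2 ≤ i → M i = M 1 * M (i - 1) + N (i - 1) ∧ N i = N 1 * M (i - 1))
    (hdet : (∑ i ∈ Finset.Icc 1 n, ((-1 : ℂ) ^ i * f i) • M (i - 1)).det ≠ 0) :
    U = (-(f 0) • (1 : Matrix (Fin n) (Fin n) ℂ)
          - ∑ i ∈ Finset.Icc 1 n, ((-1 : ℂ) ^ i * f i) • N (i - 1)) *
        (∑ i ∈ Finset.Icc 1 n, ((-1 : ℂ) ^ i * f i) • M (i - 1))⁻¹ * Kα ∧
    V = Kα⁻¹ * (Y * Kα + Kβ * X - U * Kβ) := by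
  -- basic invertibility facts
  have hKαi : Kα⁻¹ * Kα = 1 := nonsing_inv_mul Kα hKα
  have hKαi' : Kα * Kα⁻¹ = 1 := mul_nonsing_inv Kα hKα
  have hKβi' : Kβ * Kβ⁻¹ = 1 := mul_nonsing_inv Kβ hKβ
  -- coefficient identities from the factorization
  have h0 : U * V = Y * X := by
    have := hfact 0
    simpa using this
  have hlin : U * Kβ + Kα * V = Y * Kα + Kβ * X := by
    have h1 := hfact 1
    have hm1 := hfact (-1)
    simp only [one_smul, neg_smul, sub_neg_eq_add] at h1 hm1
    have hdiff : (U + Kα) * (V + Kβ) - (U - Kα) * (V - Kβ)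
        = (Y + Kβ) * (X + Kα) - (Y - Kβ) * (X - Kα) := by rw [h1, hm1]
    have hL : (U + Kα) * (V + Kβ) - (U - Kα) * (V - Kβ)
        = (U * Kβ + Kα * V) + (U * Kβ + Kα * V) := by noncomm_ring
    have hR : (Y + Kβ) * (X + Kα) - (Y - Kβ) * (X - Kα)
        = (Y * Kα + Kβ * X) + (Y * Kα + Kβ * X) := by noncomm_ring
    rw [hL, hR] at hdiff
    have h2 : (2 : ℂ) • (U * Kβ + Kα * V) = (2 : ℂ) • (Y * Kα + Kβ * X) := by
      rw [two_smul, two_smul]; exact hdiff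
    exact smul_right_injective _ (two_ne_zero) h2
  set B : Matrix (Fin n) (Fin n) ℂ := U * Kα⁻¹ with hB
  -- determinant identity for B
  have hdetB : ∀ ζ : ℂ, (B - ζ • 1).det * Kα.det
      = ∑ i ∈ Finset.range (n + 1), (-1 : ℂ) ^ i * f i * ζ ^ i := by
    intro ζ
    have hU : (B - ζ • 1) * Kα = U - ζ • Kα := by
      rw [sub_mul, hB, mul_assoc, hKαi, mul_one, smul_mul_assoc, one_mul]
    rw [← Matrix.det_mul, hU, hchar ζ, hpoly ζ]
  -- polynomial identity
  have hpolyeq : (∑ i ∈ Finset.range (n + 1),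
        Polynomial.C ((-1 : ℂ) ^ i * f i) * Polynomial.X ^ i)
      = B.charpoly * Polynomial.C ((-1 : ℂ) ^ n * Kα.det) := by
    apply Polynomial.funext
    intro ζ
    have h1 : (ζ • (1 : Matrix (Fin n) (Fin n) ℂ) - B) = -(B - ζ • 1) := (neg_sub _ _).symm
    simp only [Polynomial.eval_finset_sum, Polynomial.eval_mul, Polynomial.eval_C,
      Polynomial.eval_pow, Polynomial.eval_X, charpoly_eval_aux, h1, Matrix.det_neg,
      Fintype.card_fin]
    rw [← hdetB ζ]
    rw [show ((-1 : ℂ) ^ n * (B - ζ • 1).det) * ((-1 : ℂ) ^ n * Kα.det)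
        = ((-1 : ℂ) ^ n * (-1 : ℂ) ^ n) * ((B - ζ • 1).det * Kα.det) by ring,
      ← pow_add, Even.neg_one_pow ⟨n, rfl⟩, one_mul]
  -- Cayley–Hamilton for B
  have hCH : ∑ i ∈ Finset.range (n + 1), ((-1 : ℂ) ^ i * f i) • B ^ i = 0 := by
    have h := congrArg (Polynomial.aeval B) hpolyeq
    rw [map_sum, _root_.map_mul, Matrix.aeval_self_charpoly, zero_mul] at h
    rw [← h]
    refine Finset.sum_congr rfl fun i _ => ?_
    rw [_root_.map_mul, Polynomial.aeval_C, map_pow, Polynomial.aeval_X,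
      Algebra.algebraMap_eq_smul_one, smul_mul_assoc, one_mul]
  -- the key quadratic identity
  have c1 : ∀ W : Matrix (Fin n) (Fin n) ℂ, Kβ * (Kβ⁻¹ * W) = W :=
    fun W => mul_nonsing_inv_cancel_left _ _ hKβ
  have c2 : ∀ W : Matrix (Fin n) (Fin n) ℂ, Kα⁻¹ * (Kα * W) = W :=
    fun W => nonsing_inv_mul_cancel_left _ _ hKα
  have h0' : ∀ W : Matrix (Fin n) (Fin n) ℂ, U * (V * W) = Y * (X * W) :=
    fun W => by rw [← mul_assoc, h0, mul_assoc]
  have hB2 : B * B = B * M 1 + N 1 := by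
    rw [hB, hM1, hN1, ← hlin]
    simp only [add_mul, mul_add, neg_mul, mul_neg, mul_assoc, c1, c2, h0']
    abel
  -- powers of B via the recursion
  have hpow : ∀ i, 1 ≤ i → B ^ i = B * M (i - 1) + N (i - 1) := by
    intro i hi
    induction i with
    | zero => omega
    | succ k ih =>
      rcases Nat.lt_or_ge k 1 with hk | hk
      · interval_cases k
        simp [hM0, hN0]
      · rcases Nat.lt_or_ge k 2 with hk2 | hk2
        · interval_cases k
          simpa [pow_two] using hB2
        · have hrk := hrec k hk2
          have ihk := ih hk
          have hstep : B ^ (k + 1) = B * (B * M (k - 1) + N (k - 1)) := by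
            rw [pow_succ', ihk]
          rw [hstep, Nat.add_sub_cancel, hrk.1, hrk.2]
          simp only [mul_add, ← mul_assoc, hB2, add_mul]
          abel
  -- assemble
  set SM := ∑ i ∈ Finset.Icc 1 n, ((-1 : ℂ) ^ i * f i) • M (i - 1) with hSM
  set SN := ∑ i ∈ Finset.Icc 1 n, ((-1 : ℂ) ^ i * f i) • N (i - 1) with hSN
  have hsplit : Finset.range (n + 1) = insert 0 (Finset.Icc 1 n) := by
    ext x; simp; omega
  rw [hsplit, Finset.sum_insert (by simp)] at hCH
  simp only [pow_zero, one_mul] at hCH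
  have hsum : ∑ i ∈ Finset.Icc 1 n, ((-1 : ℂ) ^ i * f i) • B ^ i = B * SM + SN := by
    rw [hSM, hSN, Finset.mul_sum, ← Finset.sum_add_distrib]
    apply Finset.sum_congr rfl
    intro i hi
    have hi1 : 1 ≤ i := (Finset.mem_Icc.mp hi).1
    rw [hpow i hi1, smul_add, mul_smul_comm]
  rw [hsum] at hCH
  have hkey : B * SM = -(f 0) • 1 - SN := by
    rw [neg_smul]
    have := hCH
    linear_combination (norm := abel) this
  have hSMdet : IsUnit SM.det := isUnit_iff_ne_zero.mpr hdet
  have hSMi : SM * SM⁻¹ = 1 := mul_nonsing_inv _ hSMdet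
  constructor
  · have hUB : U = B * Kα := (nonsing_inv_mul_cancel_right Kα U hKα).symm
    rw [hUB, ← mul_nonsing_inv_cancel_right SM B hSMdet, hkey]
  · have : Y * Kα + Kβ * X - U * Kβ = Kα * V := by rw [← hlin]; abel
    rw [this, nonsing_inv_mul_cancel_left _ _ hKα]
end

section
/- Let Kα, Kβ be commuting invertible n×n matrices and U, V, X, Y satisfy UV = YX and UKβ + KαV = YKα + KβX. If det(UKβ − YKα) ≠ 0, then UKα⁻¹ is similar to Kα⁻¹X and Kβ⁻¹V is similar to YKβ⁻¹; consequently det(U − ζKα) = det(X − ζKα) and det(V − ζKβ) = det(Y − ζKβ) for all ζ. -/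
open Matrix

theorem stmt12 {n : ℕ} (Kα Kβ U V X Y : Matrix (Fin n) (Fin n) ℂ)
    (hKα : IsUnit Kα.det) (hKβ : IsUnit Kβ.det) (hcomm : Kα * Kβ = Kβ * Kα)
    (h1 : U * V = Y * X)
    (h2 : U * Kβ + Kα * V = Y * Kα + Kβ * X)
    (hdet : (U * Kβ - Y * Kα).det ≠ 0) :
    U * Kα⁻¹ * (Y * Kα - U * Kβ) = (Y * Kα - U * Kβ) * (Kα⁻¹ * X) ∧
    (U * Kβ - Y * Kα) * (Kβ⁻¹ * V) = Y * Kβ⁻¹ * (U * Kβ - Y * Kα) ∧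
    (∀ ζ : ℂ, (U - ζ • Kα).det = (X - ζ • Kα).det) ∧
    (∀ ζ : ℂ, (V - ζ • Kβ).det = (Y - ζ • Kβ).det) := by
  have hα1 : Kα⁻¹ * Kα = 1 := nonsing_inv_mul _ hKα
  have hα2 : Kα * Kα⁻¹ = 1 := mul_nonsing_inv _ hKα
  have hβ1 : Kβ⁻¹ * Kβ = 1 := nonsing_inv_mul _ hKβ
  have hβ2 : Kβ * Kβ⁻¹ = 1 := mul_nonsing_inv _ hKβ
  have hcαβ : Kα⁻¹ * Kβ = Kβ * Kα⁻¹ := by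
    calc Kα⁻¹ * Kβ = Kα⁻¹ * (Kβ * Kα) * Kα⁻¹ := by
          rw [mul_assoc, mul_assoc, hα2, mul_one]
      _ = Kβ * Kα⁻¹ := by rw [← hcomm, ← mul_assoc, hα1, one_mul]
  have hcβα : Kβ⁻¹ * Kα = Kα * Kβ⁻¹ := by
    calc Kβ⁻¹ * Kα = Kβ⁻¹ * (Kα * Kβ) * Kβ⁻¹ := by
          rw [mul_assoc, mul_assoc, hβ2, mul_one]
      _ = Kα * Kβ⁻¹ := by rw [hcomm, ← mul_assoc, hβ1, one_mul]
  -- pointwise versions for simp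
  have sα1 : ∀ M : Matrix (Fin n) (Fin n) ℂ, Kα⁻¹ * (Kα * M) = M := fun M => by
    rw [← mul_assoc, hα1, one_mul]
  have sα2 : ∀ M : Matrix (Fin n) (Fin n) ℂ, Kα * (Kα⁻¹ * M) = M := fun M => by
    rw [← mul_assoc, hα2, one_mul]
  have sβ1 : ∀ M : Matrix (Fin n) (Fin n) ℂ, Kβ⁻¹ * (Kβ * M) = M := fun M => by
    rw [← mul_assoc, hβ1, one_mul]
  have sβ2 : ∀ M : Matrix (Fin n) (Fin n) ℂ, Kβ * (Kβ⁻¹ * M) = M := fun M => by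
    rw [← mul_assoc, hβ2, one_mul]
  have scαβ : ∀ M : Matrix (Fin n) (Fin n) ℂ, Kα⁻¹ * (Kβ * M) = Kβ * (Kα⁻¹ * M) :=
    fun M => by rw [← mul_assoc, hcαβ, mul_assoc]
  have scβα : ∀ M : Matrix (Fin n) (Fin n) ℂ, Kβ⁻¹ * (Kα * M) = Kα * (Kβ⁻¹ * M) :=
    fun M => by rw [← mul_assoc, hcβα, mul_assoc]
  have h2' : Y * Kα - U * Kβ = Kα * V - Kβ * X := by
    rw [sub_eq_sub_iff_add_eq_add, ← h2]; abel
  have h2'' : U * Kβ - Y * Kα = Kβ * X - Kα * V := by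
    rw [sub_eq_sub_iff_add_eq_add, h2]; abel
  have c1 : U * Kα⁻¹ * (Y * Kα - U * Kβ) = (Y * Kα - U * Kβ) * (Kα⁻¹ * X) := by
    conv_lhs => rw [h2']
    simp only [mul_sub, sub_mul, mul_assoc, sα1, sα2, scαβ, h1]
  have c2 : (U * Kβ - Y * Kα) * (Kβ⁻¹ * V) = Y * Kβ⁻¹ * (U * Kβ - Y * Kα) := by
    conv_rhs => rw [h2'']
    simp only [mul_sub, sub_mul, mul_assoc, sβ1, sβ2, scβα, h1]
  have hdetA : (Y * Kα - U * Kβ).det ≠ 0 := by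
    have : Y * Kα - U * Kβ = -(U * Kβ - Y * Kα) := by abel
    rw [this, det_neg]
    simpa using hdet
  refine ⟨c1, c2, ?_, ?_⟩
  · intro ζ
    obtain ⟨A, hA⟩ : ∃ A, A = Y * Kα - U * Kβ := ⟨_, rfl⟩
    rw [← hA] at c1 hdetA
    have key : (U * Kα⁻¹ - ζ • 1) * A = A * (Kα⁻¹ * X - ζ • 1) := by
      rw [sub_mul, mul_sub, c1, smul_mul_assoc, one_mul, mul_smul_comm, mul_one]
    have hdetkey : (U * Kα⁻¹ - ζ • 1).det = (Kα⁻¹ * X - ζ • 1).det := by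
      have h := congrArg det key
      rw [det_mul, det_mul, mul_comm] at h
      exact mul_left_cancel₀ hdetA h
    have e1 : U - ζ • Kα = (U * Kα⁻¹ - ζ • 1) * Kα := by
      rw [sub_mul, mul_assoc, hα1, mul_one, smul_mul_assoc, one_mul]
    have e2 : X - ζ • Kα = Kα * (Kα⁻¹ * X - ζ • 1) := by
      rw [mul_sub, ← mul_assoc, hα2, one_mul, mul_smul_comm, mul_one]
    rw [e1, e2, det_mul, det_mul, hdetkey, mul_comm]
  · intro ζ
    obtain ⟨B, hB⟩ : ∃ B, B = U * Kβ - Y * Kα := ⟨_, rfl⟩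
    rw [← hB] at c2 hdet
    have key : B * (Kβ⁻¹ * V - ζ • 1) = (Y * Kβ⁻¹ - ζ • 1) * B := by
      rw [sub_mul, mul_sub, c2, smul_mul_assoc, one_mul, mul_smul_comm, mul_one]
    have hdetkey : (Kβ⁻¹ * V - ζ • 1).det = (Y * Kβ⁻¹ - ζ • 1).det := by
      have h := congrArg det key
      rw [det_mul, det_mul, mul_comm (Y * Kβ⁻¹ - ζ • 1).det] at h
      exact mul_left_cancel₀ hdet h
    have e1 : V - ζ • Kβ = Kβ * (Kβ⁻¹ * V - ζ • 1) := by
      rw [mul_sub, ← mul_assoc, hβ2, one_mul, mul_smul_comm, mul_one]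
    have e2 : Y - ζ • Kβ = (Y * Kβ⁻¹ - ζ • 1) * Kβ := by
      rw [sub_mul, mul_assoc, hβ1, mul_one, smul_mul_assoc, one_mul]
    rw [e1, e2, det_mul, det_mul, hdetkey, mul_comm]
end

section
/- Let X be a 3×3 matrix with entries xᵢⱼ, x₁₃ ≠ 0, x₂₃ ≠ 0, and suppose x₁₁ = x₁₃x₂₁/x₂₃ + x₂₂ − x₁₂x₂₃/x₁₃, x₃₁ = x₂₁(x₁₂x₂₃ + x₁₃(x₃₃ − x₂₂))/(x₁₃x₂₃), x₃₂ = x₁₂(x₁₂x₂₃ + x₁₃(x₃₃ − x₂₂))/x₁₃². Let α₀ = det X, α₂ = tr X, and α₁ = the sum of principal 2×2 minors of X (so det(X − ζI) = −ζ³ + α₂ζ² − α₁ζ + α₀). Then 4α₀α₂³ − α₁²α₂² + 4α₁³ − 18α₀α₁α₂ + 27α₀² = 0. -/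
/-!
Put `c = x₁₂ / x₁₃`, `d = x₂₁ / x₂₃` and `λ = x₂₂ - c x₂₃`. The three constraints say exactly that
`X - λ I = u vᵀ` with `u = (x₁₃, x₂₃, x₃₃ - λ)` and `v = (d, c, 1)`, so `X` is a scalar plus a rank one
matrix. Its characteristic polynomial is then `(ζ - λ)² (ζ - λ - v ⬝ u)`, which has a double root,
hence vanishing discriminant.
-/

open Matrix

section ScalarAddRankOne

variable {R : Type*} [CommRing R]

def principalMinorSum (X : Matrix (Fin 3) (Fin 3) R) : R :=
  (X 0 0 * X 1 1 - X 0 1 * X 1 0) + (X 0 0 * X 2 2 - X 0 2 * X 2 0) + (X 1 1 * X 2 2 - X 1 2 * X 2 1)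

variable (l : R) (u v : Fin 3 → R)

theorem trace_smul_one_add_vecMulVec : (l • 1 + vecMulVec u v).trace = 3 * l + v ⬝ᵥ u := by
  simp [trace, vecMulVec_apply, dotProduct, Fin.sum_univ_three]
  ring

theorem principalMinorSum_smul_one_add_vecMulVec :
    principalMinorSum (l • 1 + vecMulVec u v) = 3 * l ^ 2 + 2 * l * (v ⬝ᵥ u) := by
  simp [principalMinorSum, vecMulVec_apply, dotProduct, Fin.sum_univ_three]
  ring

theorem det_smul_one_add_vecMulVec : (l • 1 + vecMulVec u v).det = l ^ 3 + l ^ 2 * (v ⬝ᵥ u) := by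
  simp [det_fin_three, vecMulVec_apply, dotProduct, Fin.sum_univ_three]
  ring

end ScalarAddRankOne

theorem cubic_discriminant_eq_zero_of_double_root {R : Type*} [CommRing R] (l t : R) :
    4 * (l ^ 3 + l ^ 2 * t) * (3 * l + t) ^ 3 - (3 * l ^ 2 + 2 * l * t) ^ 2 * (3 * l + t) ^ 2
      + 4 * (3 * l ^ 2 + 2 * l * t) ^ 3 - 18 * (l ^ 3 + l ^ 2 * t) * (3 * l ^ 2 + 2 * l * t) * (3 * l + t)
      + 27 * (l ^ 3 + l ^ 2 * t) ^ 2 = 0 := by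
  ring

theorem eq_smul_one_add_vecMulVec_of_constraints {K : Type*} [Field K]
    (X : Matrix (Fin 3) (Fin 3) K) (h13 : X 0 2 ≠ 0) (h23 : X 1 2 ≠ 0)
    (hx11 : X 0 0 = X 0 2 * X 1 0 / X 1 2 + X 1 1 - X 0 1 * X 1 2 / X 0 2)
    (hx31 : X 2 0 = X 1 0 * (X 0 1 * X 1 2 + X 0 2 * (X 2 2 - X 1 1)) / (X 0 2 * X 1 2))
    (hx32 : X 2 1 = X 0 1 * (X 0 1 * X 1 2 + X 0 2 * (X 2 2 - X 1 1)) / (X 0 2) ^ 2) :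
    let l := X 1 1 - X 0 1 / X 0 2 * X 1 2
    X = l • 1 + vecMulVec ![X 0 2, X 1 2, X 2 2 - l] ![X 1 0 / X 1 2, X 0 1 / X 0 2, 1] := by
  intro l
  ext i j
  fin_cases i <;> fin_cases j <;> simp [l, hx11, hx31, hx32] <;> field_simp <;> ring

theorem stmt13 (X : Matrix (Fin 3) (Fin 3) ℂ)
    (h13 : X 0 2 ≠ 0) (h23 : X 1 2 ≠ 0)
    (hx11 : X 0 0 = X 0 2 * X 1 0 / X 1 2 + X 1 1 - X 0 1 * X 1 2 / X 0 2)
    (hx31 : X 2 0 = X 1 0 * (X 0 1 * X 1 2 + X 0 2 * (X 2 2 - X 1 1)) / (X 0 2 * X 1 2))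
    (hx32 : X 2 1 = X 0 1 * (X 0 1 * X 1 2 + X 0 2 * (X 2 2 - X 1 1)) / (X 0 2) ^ 2)
    (a0 a1 a2 : ℂ)
    (ha0 : a0 = X.det)
    (ha2 : a2 = X.trace)
    (ha1 : a1 = (X 0 0 * X 1 1 - X 0 1 * X 1 0) + (X 0 0 * X 2 2 - X 0 2 * X 2 0)
        + (X 1 1 * X 2 2 - X 1 2 * X 2 1)) :
    4 * a0 * a2 ^ 3 - a1 ^ 2 * a2 ^ 2 + 4 * a1 ^ 3 - 18 * a0 * a1 * a2 + 27 * a0 ^ 2 = 0 := by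
  change a1 = principalMinorSum X at ha1
  have hX := eq_smul_one_add_vecMulVec_of_constraints X h13 h23 hx11 hx31 hx32
  rw [hX] at ha0 ha1 ha2
  rw [ha0, ha1, ha2, det_smul_one_add_vecMulVec, principalMinorSum_smul_one_add_vecMulVec,
    trace_smul_one_add_vecMulVec]
  exact cubic_discriminant_eq_zero_of_double_root _ _
end

section
/- Under the constraints x₁₁ = x₁₃x₂₁/x₂₃ + x₂₂ − x₁₂x₂₃/x₁₃, x₃₁ = x₂₁(x₁₂x₂₃ + x₁₃(x₃₃−x₂₂))/(x₁₃x₂₃), x₃₂ = x₁₂(x₁₂x₂₃ + x₁₃(x₃₃−x₂₂))/x₁₃² (with x₁₃, x₂₃ ≠ 0), the Casimir functions of the 3×3 matrix X are: f₀(X) = (x₁₃x₂₂ − x₁₂x₂₃)²(x₂₁x₁₃² + x₂₃x₃₃x₁₃ + x₁₂x₂₃²)/(x₁₃³x₂₃), f₁(X) = (x₁₃x₂₂ − x₁₂x₂₃)(2x₂₁x₁₃² + x₂₃(x₂₂+2x₃₃)x₁₃ + x₁₂x₂₃²)/(x₁₃²x₂₃), f₂(X) = x₁₃x₂₁/x₂₃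 + 2x₂₂ − x₁₂x₂₃/x₁₃ + x₃₃. -/
open Matrix

theorem stmt14 (X : Matrix (Fin 3) (Fin 3) ℂ)
    (h13 : X 0 2 ≠ 0) (h23 : X 1 2 ≠ 0)
    (hx11 : X 0 0 = X 0 2 * X 1 0 / X 1 2 + X 1 1 - X 0 1 * X 1 2 / X 0 2)
    (hx31 : X 2 0 = X 1 0 * (X 0 1 * X 1 2 + X 0 2 * (X 2 2 - X 1 1)) / (X 0 2 * X 1 2))
    (hx32 : X 2 1 = X 0 1 * (X 0 1 * X 1 2 + X 0 2 * (X 2 2 - X 1 1)) / (X 0 2) ^ 2) :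
    X.det = (X 0 2 * X 1 1 - X 0 1 * X 1 2) ^ 2 *
        (X 1 0 * (X 0 2) ^ 2 + X 1 2 * X 2 2 * X 0 2 + X 0 1 * (X 1 2) ^ 2) /
        ((X 0 2) ^ 3 * X 1 2) ∧
    (X 0 0 * X 1 1 - X 0 1 * X 1 0) + (X 0 0 * X 2 2 - X 0 2 * X 2 0)
        + (X 1 1 * X 2 2 - X 1 2 * X 2 1) =
      (X 0 2 * X 1 1 - X 0 1 * X 1 2) *
        (2 * X 1 0 * (X 0 2) ^ 2 + X 1 2 * (X 1 1 + 2 * X 2 2) * X 0 2 + X 0 1 * (X 1 2) ^ 2) /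
        ((X 0 2) ^ 2 * X 1 2) ∧
    X.trace = X 0 2 * X 1 0 / X 1 2 + 2 * X 1 1 - X 0 1 * X 1 2 / X 0 2 + X 2 2 := by
  rw [det_fin_three, trace_fin_three, hx11, hx31, hx32]
  refine ⟨?_, ?_, ?_⟩ <;> field_simp <;> ring
end

section
/- For the matrix L'(x₁,x₂,X₁,X₂;c₁,c₂) = [[c₁+c₂−x₁X₁, −X₁x₂, X₁],[−x₁X₂, c₁+c₂−x₂X₂, X₂],[−x₁(x₁X₁+x₂X₂−3c₂), −x₂(x₁X₁+x₂X₂−3c₂), c₁−2c₂+x₁X₁+x₂X₂]], the characteristic data is independent of (x₁,x₂,X₁,X₂): det L' = (c₁−2c₂)(c₁+c₂)², the sum of principal 2×2 minors is 3(c₁² − c₂²), and tr L' = 3c₁. -/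
open Matrix

/-- The spectral-parameter-free part of the Lax matrix of the 8-dimensional
symplectic Yang–Baxter map. -/
noncomputable def L15 (c1 c2 x1 x2 X1 X2 : ℂ) : Matrix (Fin 3) (Fin 3) ℂ :=
  !![c1 + c2 - x1 * X1, -(X1 * x2), X1;
     -(x1 * X2), c1 + c2 - x2 * X2, X2;
     -(x1 * (x1 * X1 + x2 * X2 - 3 * c2)), -(x2 * (x1 * X1 + x2 * X2 - 3 * c2)),
       c1 - 2 * c2 + x1 * X1 + x2 * X2]

theorem stmt15 (c1 c2 x1 x2 X1 X2 : ℂ) :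
    (L15 c1 c2 x1 x2 X1 X2).det = (c1 - 2 * c2) * (c1 + c2) ^ 2 ∧
    ((L15 c1 c2 x1 x2 X1 X2) 0 0 * (L15 c1 c2 x1 x2 X1 X2) 1 1
        - (L15 c1 c2 x1 x2 X1 X2) 0 1 * (L15 c1 c2 x1 x2 X1 X2) 1 0)
      + ((L15 c1 c2 x1 x2 X1 X2) 0 0 * (L15 c1 c2 x1 x2 X1 X2) 2 2
        - (L15 c1 c2 x1 x2 X1 X2) 0 2 * (L15 c1 c2 x1 x2 X1 X2) 2 0)
      + ((L15 c1 c2 x1 x2 X1 X2) 1 1 * (L15 c1 c2 x1 x2 X1 X2) 2 2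
        - (L15 c1 c2 x1 x2 X1 X2) 1 2 * (L15 c1 c2 x1 x2 X1 X2) 2 1)
      = 3 * (c1 ^ 2 - c2 ^ 2) ∧
    (L15 c1 c2 x1 x2 X1 X2).trace = 3 * c1 := by
  refine ⟨?_, ?_, ?_⟩ <;>
    simp [L15, Matrix.det_fin_three, Matrix.trace_fin_three] <;> ring
end

section
/- For the Boussinesq Lax matrix L_B'(x₁,x₂,X₁,X₂;α) = [[α−x₁X₁, −X₁x₂, X₁],[−x₁X₂, α−x₂X₂, X₂],[−x₁(x₁X₁+x₂X₂), −x₂(x₁X₁+x₂X₂), α+x₁X₁+x₂X₂]], the characteristic polynomial is det(L_B' − ζI) = (α − ζ)³; equivalently det L_B' = α³, the sum of principal 2×2 minors equals 3α², and tr L_B' = 3α, for all x₁, x₂, X₁, X₂. -/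
/-! `L_B' - α` is the rank-one matrix `u vᵀ` with `u = (X₁, X₂, x₁X₁ + x₂X₂)` and
`v = (-x₁, -x₂, 1)`, and `v ⬝ u = 0`, so it squares to zero. Hence `L_B'` is `α` plus a nilpotent
matrix, whose characteristic polynomial is `(α - ζ)³`. Over a reduced ring a nilpotent matrix has
trace zero, which gives `tr L_B' = 3α` and `tr L_B'² = 3α²` (as `L_B'² - α²` is nilpotent too);
the sum of principal `2 × 2` minors is `((tr L_B')² - tr L_B'²) / 2 = 3α²`. -/

open Matrix

/-- The Boussinesq Lax matrix (spectral-parameter-free part). -/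
noncomputable def LB (α x1 x2 X1 X2 : ℂ) : Matrix (Fin 3) (Fin 3) ℂ :=
  !![α - x1 * X1, -(X1 * x2), X1;
     -(x1 * X2), α - x2 * X2, X2;
     -(x1 * (x1 * X1 + x2 * X2)), -(x2 * (x1 * X1 + x2 * X2)), α + x1 * X1 + x2 * X2]

open Polynomial

instance Polynomial.isReduced_of_isReduced {R : Type*} [CommRing R] [IsReduced R] :
    IsReduced R[X] :=
  ⟨fun _ hP => Polynomial.ext fun i => (Polynomial.isNilpotent_iff.mp hP i).eq_zero⟩

namespace Matrix

section CommRing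

variable {n R : Type*} [Fintype n] [DecidableEq n] [CommRing R]

theorem isNilpotent_vecMulVec_of_dotProduct_eq_zero {u v : n → R} (h : v ⬝ᵥ u = 0) :
    IsNilpotent (vecMulVec u v) :=
  ⟨2, by rw [pow_two, vecMulVec_mul_vecMulVec, h, zero_smul, vecMulVec_zero]⟩

variable {M : Matrix n n R} {c : R}

theorem isNilpotent_mul_self_sub_of_isNilpotent_sub (hM : IsNilpotent (M - c • 1)) :
    IsNilpotent (M * M - c ^ 2 • 1) := by
  have hc : Commute M (c • 1) := (Commute.one_right M).smul_right c
  rw [pow_two, ← mul_one (1 : Matrix n n R), ← smul_mul_smul_comm, hc.mul_self_sub_mul_self_eq]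
  exact ((Commute.refl M).add_left hc.symm).sub_right (hc.add_left (.refl _))
    |>.isNilpotent_mul_left hM

variable [IsReduced R]

theorem charpoly_eq_X_pow_of_isNilpotent (hM : IsNilpotent M) :
    M.charpoly = X ^ Fintype.card n :=
  sub_eq_zero.mp (isNilpotent_charpoly_sub_pow_of_isNilpotent hM).eq_zero

theorem det_smul_one_add_of_isNilpotent (hM : IsNilpotent M) (c : R) :
    det (c • 1 + M) = c ^ Fintype.card n := by
  have h := eval_charpoly M (-c)
  rw [charpoly_eq_X_pow_of_isNilpotent hM, eval_pow, eval_X, scalar_apply,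
    show diagonal (fun _ => -c) - M = -(c • 1 + M) by
      rw [smul_one_eq_diagonal, neg_add', diagonal_neg],
    det_neg, neg_pow] at h
  exact ((isUnit_neg_one.pow _).mul_left_cancel h).symm

theorem det_sub_smul_one_of_isNilpotent_sub (hM : IsNilpotent (M - c • 1)) (ζ : R) :
    det (M - ζ • 1) = (c - ζ) ^ Fintype.card n := by
  rw [← det_smul_one_add_of_isNilpotent hM, sub_smul]
  congr 1
  abel

theorem trace_eq_of_isNilpotent_sub (hM : IsNilpotent (M - c • 1)) :
    trace M = Fintype.card n * c := by
  have h := (isNilpotent_trace_of_isNilpotent hM).eq_zero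
  rw [trace_sub, trace_smul, trace_one, smul_eq_mul, sub_eq_zero] at h
  rw [h, mul_comm]

end CommRing

theorem two_mul_sum_principal_minors_fin_three {R : Type*} [CommRing R]
    (M : Matrix (Fin 3) (Fin 3) R) :
    2 * ((M 0 0 * M 1 1 - M 0 1 * M 1 0) + (M 0 0 * M 2 2 - M 0 2 * M 2 0)
      + (M 1 1 * M 2 2 - M 1 2 * M 2 1)) = trace M ^ 2 - trace (M * M) := by
  simp only [trace_fin_three, mul_apply, Fin.sum_univ_three]
  ring

theorem sum_principal_minors_fin_three_of_isNilpotent_sub {K : Type*} [Field K] [CharZero K]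
    {M : Matrix (Fin 3) (Fin 3) K} {c : K} (hM : IsNilpotent (M - c • 1)) :
    (M 0 0 * M 1 1 - M 0 1 * M 1 0) + (M 0 0 * M 2 2 - M 0 2 * M 2 0)
      + (M 1 1 * M 2 2 - M 1 2 * M 2 1) = 3 * c ^ 2 := by
  have h := two_mul_sum_principal_minors_fin_three M
  rw [trace_eq_of_isNilpotent_sub hM,
    trace_eq_of_isNilpotent_sub (isNilpotent_mul_self_sub_of_isNilpotent_sub hM)] at h
  simp only [Fintype.card_fin, Nat.cast_ofNat] at h
  linear_combination h / 2

end Matrix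

theorem LB_sub_smul_one (α x1 x2 X1 X2 : ℂ) :
    LB α x1 x2 X1 X2 - α • 1 = vecMulVec ![X1, X2, x1 * X1 + x2 * X2] ![-x1, -x2, 1] := by
  ext i j
  fin_cases i <;> fin_cases j <;> simp [LB, vecMulVec_apply] <;> ring

theorem isNilpotent_LB_sub_smul_one (α x1 x2 X1 X2 : ℂ) :
    IsNilpotent (LB α x1 x2 X1 X2 - α • 1) := by
  rw [LB_sub_smul_one]
  refine isNilpotent_vecMulVec_of_dotProduct_eq_zero ?_
  simp only [dotProduct, Fin.sum_univ_three, cons_val_zero, cons_val_one, cons_val]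
  ring

theorem stmt16 (α x1 x2 X1 X2 : ℂ) :
    (∀ ζ : ℂ, (LB α x1 x2 X1 X2 - ζ • (1 : Matrix (Fin 3) (Fin 3) ℂ)).det = (α - ζ) ^ 3) ∧
    (LB α x1 x2 X1 X2).det = α ^ 3 ∧
    ((LB α x1 x2 X1 X2) 0 0 * (LB α x1 x2 X1 X2) 1 1
        - (LB α x1 x2 X1 X2) 0 1 * (LB α x1 x2 X1 X2) 1 0)
      + ((LB α x1 x2 X1 X2) 0 0 * (LB α x1 x2 X1 X2) 2 2
        - (LB α x1 x2 X1 X2) 0 2 * (LB α x1 x2 X1 X2) 2 0)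
      + ((LB α x1 x2 X1 X2) 1 1 * (LB α x1 x2 X1 X2) 2 2
        - (LB α x1 x2 X1 X2) 1 2 * (LB α x1 x2 X1 X2) 2 1)
      = 3 * α ^ 2 ∧
    (LB α x1 x2 X1 X2).trace = 3 * α := by
  have hN := isNilpotent_LB_sub_smul_one α x1 x2 X1 X2
  have hchar (ζ : ℂ) := det_sub_smul_one_of_isNilpotent_sub hN ζ
  simp only [Fintype.card_fin] at hchar
  refine ⟨hchar, by simpa using hchar 0, sum_principal_minors_fin_three_of_isNilpotent_sub hN, ?_⟩
  simpa using trace_eq_of_isNilpotent_sub hN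
end
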